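/- Let ξ ∈ {±1}^{∂Λ} be an Ising boundary condition on a finite box Λ ⊂ ℤ², inducing the FK wiring that wires the plus boundary sites 𝓟(ξ) pairwise and the minus boundary sites 𝓜(ξ) pairwise, and let A^ξ be the event that there is no open path connecting 𝓟(ξ) to 𝓜(ξ). Let ν^ξ denote the critical FK-Ising measure on Λ̄ = Λ ∪ ∂Λ with this wiring and ν¹ the one with the fully wired boundary. Then for any set of edges Δ, any edge e ∉ Δ, and any configurations η, η' ∈ {0,1}^Δ with η' ≤ η pointwise such that the conditioning events have positive probability, ν¹(ω(e) = 1 | ω(Δ) = η) ≥ ν^ξ(ω(e) = 1 | A^ξ, ω(Δ) = η'). -/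

import Mathlib

open scoped Classical

/-- Sites of the square lattice `ℤ²`. -/
abbrev Site : Type := ℤ × ℤ

/-- Nearest-neighbor adjacency in `ℤ²`. -/
def Adj (u v : Site) : Prop :=
  (u.1 - v.1).natAbs + (u.2 - v.2).natAbs = 1

instance : ∀ u v : Site, Decidable (Adj u v) := fun u v => by
  unfold Adj; infer_instance

/-- The four nearest neighbors of a site. -/
def nbrs (u : Site) : Finset Site :=
  {(u.1 + 1, u.2), (u.1 - 1, u.2), (u.1, u.2 + 1), (u.1, u.2 - 1)}

/-- The (outer) boundary `∂Λ`: sites of `ℤ² ∖ Λ` adjacent to `Λ`. -/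
def bdry (Λ : Finset Site) : Finset Site :=
  (Λ.biUnion nbrs) \ Λ

/-- The nearest-neighbor edges of a vertex set `V ⊆ ℤ²`, each edge recorded once,
oriented rightwards or upwards. -/
def edges (V : Finset Site) : Finset (Site × Site) :=
  (V ×ˢ V).filter fun e => e.2 = (e.1.1 + 1, e.1.2) ∨ e.2 = (e.1.1, e.1.2 + 1)

/-- `u` and `v` are joined by an open edge of the configuration `ω`. -/
def openAdj (V : Finset Site) (ω : edges V → Bool) (u v : Site) : Prop :=
  (∃ h : (u, v) ∈ edges V, ω ⟨(u, v), h⟩) ∨ (∃ h : (v, u) ∈ edges V, ω ⟨(v, u), h⟩)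

/-- Connectivity by open paths, allowing in addition the use of the boundary
wiring `W`. -/
def fkConn (V : Finset Site) (ω : edges V → Bool) (W : Site → Site → Prop)
    (u v : Site) : Prop :=
  Relation.EqvGen (fun a b => openAdj V ω a b ∨ W a b) u v

/-- Connectivity by open paths only (not using any boundary wiring). -/
def openConn (V : Finset Site) (ω : edges V → Bool) (u v : Site) : Prop :=
  Relation.EqvGen (openAdj V ω) u v

/-- The partition of `V` into FK clusters (wired sites being identified). -/
def clusterSetoid (V : Finset Site) (ω : edges V → Bool) (W : Site → Site → Prop) :
    Setoid V :=
  Setoid.comap Subtype.val (Relation.EqvGen.setoid fun a b => openAdj V ω a b ∨ W a b)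

/-- The number of clusters `k(ω)`. -/
noncomputable def numClusters (V : Finset Site) (ω : edges V → Bool)
    (W : Site → Site → Prop) : ℕ :=
  Nat.card (Quotient (clusterSetoid V ω W))

/-- The number of open edges `o(ω)`. -/
def numOpen (V : Finset Site) (ω : edges V → Bool) : ℕ :=
  (Finset.univ.filter fun e : edges V => ω e = true).card

/-- The number of closed edges `c(ω)`. -/
def numClosed (V : Finset Site) (ω : edges V → Bool) : ℕ :=
  (Finset.univ.filter fun e : edges V => ω e = false).card

/-- The FK weight `p^{o(ω)} (1-p)^{c(ω)} 2^{k(ω)}` (`q = 2`). -/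
noncomputable def fkWeight (p : ℝ) (V : Finset Site) (W : Site → Site → Prop)
    (ω : edges V → Bool) : ℝ :=
  p ^ numOpen V ω * (1 - p) ^ numClosed V ω * 2 ^ numClusters V ω W

/-- FK-Ising (`q = 2`) probability of an event `A`, with edge parameter `p`
and boundary wiring `W`. -/
noncomputable def fkProb (p : ℝ) (V : Finset Site) (W : Site → Site → Prop)
    (A : (edges V → Bool) → Prop) : ℝ :=
  (∑ ω : edges V → Bool, if A ω then fkWeight p V W ω else 0) /
    ∑ ω : edges V → Bool, fkWeight p V W ω

/-- The critical (self-dual) edge parameter `p_sd = √2/(1+√2)`. -/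
noncomputable def pSD : ℝ := Real.sqrt 2 / (1 + Real.sqrt 2)

/-- The inner boundary of `V`: sites of `V` adjacent to its complement. -/
def innerBdry (V : Finset Site) : Finset Site :=
  V.filter fun u => ∃ v ∈ nbrs u, v ∉ V
/-- The FK wiring induced by an Ising boundary condition `ξ`: the plus boundary sites
are wired pairwise, and the minus boundary sites are wired pairwise. -/
def wiringOf (Λ : Finset Site) (ξ : bdry Λ → Bool) : Site → Site → Prop :=
  fun u v => ∃ hu : u ∈ bdry Λ, ∃ hv : v ∈ bdry Λ, ξ ⟨u, hu⟩ = ξ ⟨v, hv⟩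

/-- The fully wired boundary condition: all boundary sites are wired pairwise. -/
def fullWiring (Λ : Finset Site) : Site → Site → Prop :=
  fun u v => u ∈ bdry Λ ∧ v ∈ bdry Λ

/-- The event `A^ξ`: no open path connects the plus boundary cluster `𝓟(ξ)` to the
minus boundary cluster `𝓜(ξ)`. -/
def noPMPath (Λ : Finset Site) (ξ : bdry Λ → Bool)
    (ω : edges (Λ ∪ bdry Λ) → Bool) : Prop :=
  ¬ ∃ p q : Site, ∃ hp : p ∈ bdry Λ, ∃ hq : q ∈ bdry Λ,
      ξ ⟨p, hp⟩ = true ∧ ξ ⟨q, hq⟩ = false ∧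
      fkConn (Λ ∪ bdry Λ) ω (wiringOf Λ ξ) p q

/-!
The comparison is an instance of the four functions theorem. Write `w^ξ` and `w¹` for the FK
weights with the two wirings. The pair of restricted weights `w^ξ·𝟙[A^ξ, ω|Δ = η']` and
`w¹·𝟙[ω|Δ = η]` satisfies the hypothesis of that theorem: `A^ξ` is decreasing and `η' ≤ η`,
so the conditioning events are stable under the relevant meets and joins, and
`w^ξ(a) w¹(b) ≤ w^ξ(a ⊓ b) w¹(a ⊔ b)` because the number of open and closed edges is modular
while the cluster count is supermodular across the two wirings: opening an edge lowers the
cluster count under the finer wiring `ξ` whenever it does so under the coarser full wiring.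
-/

open Relation

section ClassCount

variable {α : Type*}

noncomputable def numClasses (V : Finset α) (R : α → α → Prop) : ℕ :=
  Nat.card (Quotient ((EqvGen.setoid R).comap ((↑) : V → α)))

lemma numClasses_le_of_le {V : Finset α} {R R' : α → α → Prop}
    (h : ∀ a b, R a b → EqvGen R' a b) : numClasses V R' ≤ numClasses V R :=
  Nat.card_le_card_of_surjective _ <|
    Quotient.map_surjective (sa := (EqvGen.setoid R).comap ((↑) : V → α))
      (sb := (EqvGen.setoid R').comap ((↑) : V → α)) (f := id)
      (fun _ _ hab => Setoid.eqvGen_le (s := EqvGen.setoid R') h hab) Function.surjective_id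

lemma numClasses_eq_of_le_of_le {V : Finset α} {R R' : α → α → Prop}
    (h : ∀ a b, R a b → EqvGen R' a b) (h' : ∀ a b, R' a b → EqvGen R a b) :
    numClasses V R = numClasses V R' :=
  le_antisymm (numClasses_le_of_le h') (numClasses_le_of_le h)

def addPair (R : α → α → Prop) (x y : α) : α → α → Prop :=
  fun a b => R a b ∨ a = x ∧ b = y

lemma eqvGen_addPair_self (R : α → α → Prop) (x y : α) : EqvGen (addPair R x y) x y :=
  EqvGen.rel _ _ (Or.inr ⟨rfl, rfl⟩)

lemma eqvGen_addPair_iff {R : α → α → Prop} {x y a b : α} :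
    EqvGen (addPair R x y) a b ↔ EqvGen R a b ∨ (EqvGen R a x ∧ EqvGen R y b) ∨
      (EqvGen R a y ∧ EqvGen R x b) := by
  constructor
  · intro h
    induction h with
    | rel u v huv =>
      rcases huv with h | ⟨rfl, rfl⟩
      · exact Or.inl (EqvGen.rel _ _ h)
      · exact Or.inr (Or.inl ⟨EqvGen.refl _, EqvGen.refl _⟩)
    | refl u => exact Or.inl (EqvGen.refl _)
    | symm u v _ ih =>
      rcases ih with h | ⟨h₁, h₂⟩ | ⟨h₁, h₂⟩
      · exact Or.inl h.symm
      · exact Or.inr (Or.inr ⟨h₂.symm, h₁.symm⟩)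
      · exact Or.inr (Or.inl ⟨h₂.symm, h₁.symm⟩)
    | trans u v w _ _ ih₁ ih₂ =>
      rcases ih₁ with h | ⟨h₁, h₂⟩ | ⟨h₁, h₂⟩ <;> rcases ih₂ with g | ⟨g₁, g₂⟩ | ⟨g₁, g₂⟩
      · exact Or.inl (h.trans _ _ _ g)
      · exact Or.inr (Or.inl ⟨h.trans _ _ _ g₁, g₂⟩)
      · exact Or.inr (Or.inr ⟨h.trans _ _ _ g₁, g₂⟩)
      · exact Or.inr (Or.inl ⟨h₁, h₂.trans _ _ _ g⟩)
      · exact Or.inr (Or.inl ⟨h₁, g₂⟩)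
      · exact Or.inl (h₁.trans _ _ _ g₂)
      · exact Or.inr (Or.inr ⟨h₁, h₂.trans _ _ _ g⟩)
      · exact Or.inl (h₁.trans _ _ _ g₂)
      · exact Or.inr (Or.inr ⟨h₁, g₂⟩)
  · have hR : ∀ {a b}, EqvGen R a b → EqvGen (addPair R x y) a b :=
      fun h => EqvGen.mono (fun a b h => (Or.inl h : addPair R x y a b)) _ _ h
    have hxy := eqvGen_addPair_self R x y
    rintro (h | ⟨h₁, h₂⟩ | ⟨h₁, h₂⟩)
    · exact hR h
    · exact ((hR h₁).trans _ _ _ hxy).trans _ _ _ (hR h₂)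
    · exact ((hR h₁).trans _ _ _ hxy.symm).trans _ _ _ (hR h₂)

lemma numClasses_addPair_of_eqvGen {V : Finset α} {R : α → α → Prop} {x y : α}
    (hxy : EqvGen R x y) : numClasses V (addPair R x y) = numClasses V R :=
  numClasses_eq_of_le_of_le
    (by rintro a b (h | ⟨rfl, rfl⟩); exacts [EqvGen.rel _ _ h, hxy])
    (fun a b h => EqvGen.rel _ _ (Or.inl h))

lemma numClasses_addPair_of_not_eqvGen {V : Finset α} {R : α → α → Prop} {x y : α}
    (hx : x ∈ V) (hy : y ∈ V) (hxy : ¬ EqvGen R x y) :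
    numClasses V R = numClasses V (addPair R x y) + 1 := by
  set S := (EqvGen.setoid R).comap ((↑) : V → α)
  set S' := (EqvGen.setoid (addPair R x y)).comap ((↑) : V → α)
  have hSS' : ∀ ⦃a b : V⦄, S a b → S' a b :=
    fun _ _ h => EqvGen.mono (fun a b h => (Or.inl h : addPair R x y a b)) _ _ h
  let g : Quotient S → Quotient S' := Quotient.map id hSS'
  let X : Quotient S := ⟦⟨x, hx⟩⟧
  let Y : Quotient S := ⟦⟨y, hy⟩⟧
  have hXY : X ≠ Y := fun h => hxy (Quotient.exact h)
  have hgXY : g X = g Y := Quotient.sound (eqvGen_addPair_self R x y)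
  have hg : Function.Bijective fun c : {c // c ≠ Y} => g c := by
    constructor
    · rintro ⟨c₁, h₁⟩ ⟨c₂, h₂⟩ h
      induction c₁ using Quotient.inductionOn with | h u => ?_
      induction c₂ using Quotient.inductionOn with | h v => ?_
      rcases eqvGen_addPair_iff.1 (Quotient.exact h) with huv | ⟨-, hyv⟩ | ⟨huy, -⟩
      · exact Subtype.ext (Quotient.sound huv)
      · exact absurd (Quotient.sound (EqvGen.symm _ _ hyv)) h₂
      · exact absurd (Quotient.sound huy) h₁
    · intro c'
      obtain ⟨c, rfl⟩ := Quotient.map_surjective hSS' Function.surjective_id c'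
      by_cases hc : c = Y
      · exact ⟨⟨X, hXY⟩, hc ▸ hgXY⟩
      · exact ⟨⟨c, hc⟩, rfl⟩
  unfold numClasses
  rw [← Nat.card_congr (Equiv.optionSubtypeNe Y), Finite.card_option,
    Nat.card_eq_of_bijective _ hg]

lemma numClasses_addPair_add_le {V : Finset α} {R R' : α → α → Prop}
    (hRR' : ∀ a b, R a b → R' a b) {x y : α} (hx : x ∈ V) (hy : y ∈ V) :
    numClasses V (addPair R x y) + numClasses V R' ≤
      numClasses V R + numClasses V (addPair R' x y) := by
  by_cases hxy' : EqvGen R' x y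
  · have : numClasses V (addPair R x y) ≤ numClasses V R :=
      numClasses_le_of_le fun a b h => EqvGen.rel _ _ (Or.inl h)
    rw [numClasses_addPair_of_eqvGen hxy']
    omega
  · have hxy : ¬ EqvGen R x y := fun h => hxy' (EqvGen.mono hRR' _ _ h)
    rw [numClasses_addPair_of_not_eqvGen hx hy hxy, numClasses_addPair_of_not_eqvGen hx hy hxy']
    omega

end ClassCount

section Configurations

variable {V : Finset Site}

lemma mem_of_mem_edges (f : edges V) : f.1.1 ∈ V ∧ f.1.2 ∈ V :=
  Finset.mem_product.1 (Finset.mem_filter.1 f.2).1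

lemma openAdj_mono {ω ω' : edges V → Bool} (h : ω ≤ ω') {a b : Site}
    (hab : openAdj V ω a b) : openAdj V ω' a b :=
  hab.imp (fun ⟨hm, hω⟩ => ⟨hm, Bool.le_iff_imp.1 (h _) hω⟩)
    (fun ⟨hm, hω⟩ => ⟨hm, Bool.le_iff_imp.1 (h _) hω⟩)

lemma numClusters_update_true (ω : edges V → Bool) (f : edges V) (W : Site → Site → Prop) :
    numClusters V (Function.update ω f true) W =
      numClasses V (addPair (fun a b => openAdj V ω a b ∨ W a b) f.1.1 f.1.2) := by
  apply numClasses_eq_of_le_of_le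
  · rintro a b ((⟨hm, hω⟩ | ⟨hm, hω⟩) | hW)
    · by_cases hf : (⟨(a, b), hm⟩ : edges V) = f
      · subst hf
        exact eqvGen_addPair_self _ _ _
      · rw [Function.update_of_ne hf] at hω
        exact EqvGen.rel _ _ (Or.inl (Or.inl (Or.inl ⟨hm, hω⟩)))
    · by_cases hf : (⟨(b, a), hm⟩ : edges V) = f
      · subst hf
        exact (eqvGen_addPair_self _ _ _).symm
      · rw [Function.update_of_ne hf] at hω
        exact EqvGen.rel _ _ (Or.inl (Or.inl (Or.inr ⟨hm, hω⟩)))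
    · exact EqvGen.rel _ _ (Or.inl (Or.inr hW))
  · rintro a b ((hadj | hW) | ⟨rfl, rfl⟩)
    · have hω : ω ≤ Function.update ω f true := le_update_iff.2 ⟨le_top, fun _ _ => le_rfl⟩
      exact EqvGen.rel _ _ (Or.inl (openAdj_mono hω hadj))
    · exact EqvGen.rel _ _ (Or.inr hW)
    · exact EqvGen.rel _ _ (Or.inl (Or.inl ⟨f.2, by simp⟩))

def openOn (T : Finset (edges V)) (ω : edges V → Bool) : edges V → Bool :=
  fun g => decide (g ∈ T) || ω g

lemma openOn_empty (ω : edges V → Bool) : openOn ∅ ω = ω := by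
  funext g
  simp [openOn]

lemma openOn_insert (T : Finset (edges V)) (f : edges V) (ω : edges V → Bool) :
    openOn (insert f T) ω = Function.update (openOn T ω) f true := by
  funext g
  by_cases hg : g = f
  · subst hg; simp [openOn]
  · simp [openOn, hg]

lemma numClusters_openOn_add_le {W W' : Site → Site → Prop} (hW : ∀ a b, W' a b → W a b)
    {u v : edges V → Bool} (huv : u ≤ v) (T : Finset (edges V)) :
    numClusters V (openOn T u) W' + numClusters V v W ≤
      numClusters V u W' + numClusters V (openOn T v) W := by
  induction T using Finset.induction_on with
  | empty => rw [openOn_empty, openOn_empty]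
  | insert f T _ ih =>
    have hle : openOn T u ≤ openOn T v := fun g => Bool.le_iff_imp.2 fun hg => by
      simp only [openOn, Bool.or_eq_true] at hg ⊢
      exact hg.imp_right (Bool.le_iff_imp.1 (huv g))
    have step : numClasses V (addPair (fun a b => openAdj V (openOn T u) a b ∨ W' a b) f.1.1 f.1.2)
        + numClusters V (openOn T v) W ≤ numClusters V (openOn T u) W' +
          numClasses V (addPair (fun a b => openAdj V (openOn T v) a b ∨ W a b) f.1.1 f.1.2) :=
      numClasses_addPair_add_le (fun a b => Or.imp (openAdj_mono hle) (hW a b))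
        (mem_of_mem_edges f).1 (mem_of_mem_edges f).2
    rw [openOn_insert, openOn_insert, numClusters_update_true, numClusters_update_true]
    omega

lemma numClusters_add_le_inf_sup {W W' : Site → Site → Prop} (hW : ∀ a b, W' a b → W a b)
    (a b : edges V → Bool) :
    numClusters V a W' + numClusters V b W ≤
      numClusters V (a ⊓ b) W' + numClusters V (a ⊔ b) W := by
  let T : Finset (edges V) := Finset.univ.filter (a · = true)
  have key := numClusters_openOn_add_le hW (inf_le_right : a ⊓ b ≤ b) T
  have h₁ : openOn T (a ⊓ b) = a := by
    funext g; cases h : a g <;> simp [T, openOn, h]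
  have h₂ : openOn T b = a ⊔ b := by
    funext g; cases h : a g <;> simp [T, openOn, h]
  rwa [h₁, h₂] at key

end Configurations

section Weights

open Finset

lemma card_filter_inf_add_card_filter_sup {ι : Type*} [Fintype ι] (a b : ι → Bool) (c : Bool) :
    #{g | (a ⊓ b) g = c} + #{g | (a ⊔ b) g = c} = #{g | a g = c} + #{g | b g = c} := by
  simp only [card_filter, ← sum_add_distrib]
  refine sum_congr rfl fun g _ => ?_
  cases ha : a g <;> cases hb : b g <;> cases c <;> simp [ha, hb]

variable {p : ℝ} {V : Finset Site}

lemma fkWeight_pos (hp₀ : 0 < p) (hp₁ : p < 1) (W : Site → Site → Prop) (ω : edges V → Bool) :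
    0 < fkWeight p V W ω := by
  have : 0 < 1 - p := by linarith
  unfold fkWeight
  positivity

lemma fkWeight_mul_le_inf_sup {W W' : Site → Site → Prop} (hW : ∀ a b, W' a b → W a b)
    (hp₀ : 0 ≤ p) (hp₁ : p ≤ 1) (a b : edges V → Bool) :
    fkWeight p V W' a * fkWeight p V W b ≤ fkWeight p V W' (a ⊓ b) * fkWeight p V W (a ⊔ b) := by
  have : 0 ≤ 1 - p := by linarith
  unfold fkWeight
  calc _ = p ^ (numOpen V a + numOpen V b) * (1 - p) ^ (numClosed V a + numClosed V b) *
        2 ^ (numClusters V a W' + numClusters V b W) := by ring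
    _ ≤ p ^ (numOpen V (a ⊓ b) + numOpen V (a ⊔ b)) *
        (1 - p) ^ (numClosed V (a ⊓ b) + numClosed V (a ⊔ b)) *
        2 ^ (numClusters V (a ⊓ b) W' + numClusters V (a ⊔ b) W) := by
      rw [numOpen, numOpen, numOpen, numOpen, card_filter_inf_add_card_filter_sup,
        numClosed, numClosed, numClosed, numClosed, card_filter_inf_add_card_filter_sup]
      gcongr _ * 2 ^ ?_
      · norm_num
      · exact numClusters_add_le_inf_sup hW a b
    _ = _ := by ring

lemma fkProb_eq_sum_filter (W : Site → Site → Prop) (A : (edges V → Bool) → Prop) :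
    fkProb p V W A = (∑ ω with A ω, fkWeight p V W ω) / ∑ ω, fkWeight p V W ω := by
  rw [fkProb, sum_filter]

theorem fkProb_open_div_le_of_wiring_le {W W' : Site → Site → Prop}
    (hW : ∀ a b, W' a b → W a b) (hp₀ : 0 < p) (hp₁ : p < 1)
    {C C' : (edges V → Bool) → Prop} (hC : ∀ a b, C' a → C b → C' (a ⊓ b) ∧ C (a ⊔ b))
    (e : edges V) (hpos : 0 < fkProb p V W C) (hpos' : 0 < fkProb p V W' C') :
    fkProb p V W' (fun ω => ω e = true ∧ C' ω) / fkProb p V W' C'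
      ≤ fkProb p V W (fun ω => ω e = true ∧ C ω) / fkProb p V W C := by
  have hw : ∀ W, 0 ≤ fkWeight p V W := fun W ω => (fkWeight_pos hp₀ hp₁ W ω).le
  have hZ : ∀ W, 0 < ∑ ω, fkWeight p V W ω := fun W =>
    sum_pos (fun ω _ => fkWeight_pos hp₀ hp₁ W ω) univ_nonempty
  simp only [fkProb_eq_sum_filter] at *
  rw [div_pos_iff_of_pos_right (hZ W)] at hpos
  rw [div_pos_iff_of_pos_right (hZ W')] at hpos'
  rw [div_div_div_cancel_right₀ (hZ W').ne', div_div_div_cancel_right₀ (hZ W).ne',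
    div_le_div_iff₀ hpos' hpos]
  refine (four_functions_theorem _ _ _ _ (hw W') (hw W) (hw W') (hw W)
    (fkWeight_mul_le_inf_sup hW hp₀.le hp₁.le) _ _).trans (le_of_le_of_eq
      (mul_le_mul (sum_le_sum_of_subset_of_nonneg ?_ fun ω _ _ => hw W' ω)
        (sum_le_sum_of_subset_of_nonneg ?_ fun ω _ _ => hw W ω)
        (sum_nonneg fun ω _ => hw W ω) (sum_nonneg fun ω _ => hw W' ω)) (mul_comm _ _))
  · intro c hc
    obtain ⟨a, ha, b, hb, rfl⟩ := mem_infs.1 hc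
    simp only [mem_filter, mem_univ, true_and] at ha hb ⊢
    exact (hC a b ha.2 hb).1
  · intro c hc
    obtain ⟨a, ha, b, hb, rfl⟩ := mem_sups.1 hc
    simp only [mem_filter, mem_univ, true_and] at ha hb ⊢
    exact ⟨by simp [ha.1], (hC a b ha.2 hb).2⟩

end Weights

lemma pSD_pos : 0 < pSD := by
  unfold pSD
  positivity

lemma pSD_lt_one : pSD < 1 :=
  (div_lt_one (by positivity)).2 (lt_one_add _)

lemma noPMPath_antitone (Λ : Finset Site) (ξ : bdry Λ → Bool) : Antitone (noPMPath Λ ξ) := by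
  rintro ω ω' h hω' ⟨p, q, hp, hq, hpξ, hqξ, hpq⟩
  exact hω' ⟨p, q, hp, hq, hpξ, hqξ,
    EqvGen.mono (fun _ _ => Or.imp_left (openAdj_mono h)) _ _ hpq⟩

theorem stmt7_general (Λ : Finset Site) (ξ : bdry Λ → Bool)
    (Δ : Finset (edges (Λ ∪ bdry Λ))) (e : edges (Λ ∪ bdry Λ))
    (η η' : Δ → Bool) (hmono : ∀ d : Δ, η' d = true → η d = true)
    (hpos1 : 0 < fkProb pSD (Λ ∪ bdry Λ) (fullWiring Λ)
      (fun ω => ∀ d : Δ, ω d.1 = η d))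
    (hpos2 : 0 < fkProb pSD (Λ ∪ bdry Λ) (wiringOf Λ ξ)
      (fun ω => noPMPath Λ ξ ω ∧ ∀ d : Δ, ω d.1 = η' d)) :
    fkProb pSD (Λ ∪ bdry Λ) (fullWiring Λ)
        (fun ω => ω e = true ∧ ∀ d : Δ, ω d.1 = η d) /
      fkProb pSD (Λ ∪ bdry Λ) (fullWiring Λ) (fun ω => ∀ d : Δ, ω d.1 = η d)
    ≥ fkProb pSD (Λ ∪ bdry Λ) (wiringOf Λ ξ)
        (fun ω => ω e = true ∧ noPMPath Λ ξ ω ∧ ∀ d : Δ, ω d.1 = η' d) /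
      fkProb pSD (Λ ∪ bdry Λ) (wiringOf Λ ξ)
        (fun ω => noPMPath Λ ξ ω ∧ ∀ d : Δ, ω d.1 = η' d) := by
  have hη : η' ≤ η := fun d => Bool.le_iff_imp.2 (hmono d)
  refine fkProb_open_div_le_of_wiring_le (fun _ _ ⟨ha, hb, _⟩ => ⟨ha, hb⟩) pSD_pos pSD_lt_one
    ?_ e hpos1 hpos2
  rintro a b ⟨haA, ha⟩ hb
  refine ⟨⟨noPMPath_antitone Λ ξ inf_le_left haA, fun d => ?_⟩, fun d => ?_⟩
  · rw [Pi.inf_apply, ha d, hb d, inf_eq_left.2 (hη d)]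
  · rw [Pi.sup_apply, ha d, hb d, sup_eq_right.2 (hη d)]

theorem stmt7 (Λ : Finset Site) (ξ : bdry Λ → Bool)
    (Δ : Finset (edges (Λ ∪ bdry Λ))) (e : edges (Λ ∪ bdry Λ)) (he : e ∉ Δ)
    (η η' : Δ → Bool) (hmono : ∀ d : Δ, η' d = true → η d = true)
    (hpos1 : 0 < fkProb pSD (Λ ∪ bdry Λ) (fullWiring Λ)
      (fun ω => ∀ d : Δ, ω d.1 = η d))
    (hpos2 : 0 < fkProb pSD (Λ ∪ bdry Λ) (wiringOf Λ ξ)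
      (fun ω => noPMPath Λ ξ ω ∧ ∀ d : Δ, ω d.1 = η' d)) :
    fkProb pSD (Λ ∪ bdry Λ) (fullWiring Λ)
        (fun ω => ω e = true ∧ ∀ d : Δ, ω d.1 = η d) /
      fkProb pSD (Λ ∪ bdry Λ) (fullWiring Λ) (fun ω => ∀ d : Δ, ω d.1 = η d)
    ≥ fkProb pSD (Λ ∪ bdry Λ) (wiringOf Λ ξ)
        (fun ω => ω e = true ∧ noPMPath Λ ξ ω ∧ ∀ d : Δ, ω d.1 = η' d) /
      fkProb pSD (Λ ∪ bdry Λ) (wiringOf Λ ξ)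
        (fun ω => noPMPath Λ ξ ω ∧ ∀ d : Δ, ω d.1 = η' d) :=
  stmt7_general Λ ξ Δ e η η' hmono hpos1 hpos2
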